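/- Let w be a weight on R^n and b ∈ BMO^D(w). Then for every dyadic cube Q, the Haar coefficients of b satisfy |(b, h_Q)| ≤ C(n) |Q|^{1/2} ⟨w⟩_Q ‖b‖_{BMO^D(w)} for a dimensional constant C(n). -/

import Mathlib

open MeasureTheory
open scoped ENNReal

/-- A dyadic cube in `ℝⁿ` (standard dyadic grid). -/
structure DyadicCube (n : ℕ) where
  k : ℤ
  m : Fin n → ℤ

/-- The set of points of a dyadic cube. -/
def DyadicCube.toSet {n : ℕ} (Q : DyadicCube n) : Set (Fin n → ℝ) :=
  {x | ∀ i, (Q.m i : ℝ) * 2 ^ Q.k ≤ x i ∧ x i < ((Q.m i : ℝ) + 1) * 2 ^ Q.k}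

/-- Lebesgue measure of a dyadic cube, as a real number. -/
noncomputable def DyadicCube.vol {n : ℕ} (Q : DyadicCube n) : ℝ :=
  (volume Q.toSet).toReal

/-- Lebesgue average over a dyadic cube. -/
noncomputable def davg {n : ℕ} (f : (Fin n → ℝ) → ℝ) (Q : DyadicCube n) : ℝ :=
  (∫ x in Q.toSet, f x) / Q.vol

/-- The `L²(dx)` inner product on `ℝⁿ`. -/
noncomputable def inn {n : ℕ} (f g : (Fin n → ℝ) → ℝ) : ℝ := ∫ x, f x * g x

/-- The one-dimensional cancellative Haar function of the dyadic interval
`[m 2ᵏ, (m+1) 2ᵏ)`. -/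
noncomputable def haarC (k m : ℤ) : ℝ → ℝ := fun t =>
  (Real.sqrt (2 ^ k))⁻¹ *
    (Set.indicator (Set.Ico ((2 * (m : ℝ) + 1) * 2 ^ (k - 1)) ((2 * (m : ℝ) + 2) * 2 ^ (k - 1)))
        (fun _ => (1 : ℝ)) t -
      Set.indicator (Set.Ico ((2 * (m : ℝ)) * 2 ^ (k - 1)) ((2 * (m : ℝ) + 1) * 2 ^ (k - 1)))
        (fun _ => (1 : ℝ)) t)

/-- The one-dimensional non-cancellative Haar function `|I|^{-1/2} 1_I`. -/
noncomputable def haarNC (k m : ℤ) : ℝ → ℝ := fun t =>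
  (Real.sqrt (2 ^ k))⁻¹ *
    Set.indicator (Set.Ico ((m : ℝ) * 2 ^ k) (((m : ℝ) + 1) * 2 ^ k)) (fun _ => (1 : ℝ)) t

/-- A signature `ε` for a Haar function in `ℝⁿ`; `ε i = true` means the `i`-th factor is
cancellative.  A cancellative signature is one with at least one cancellative factor. -/
def Sig (n : ℕ) : Type := {ε : Fin n → Bool // ∃ i, ε i = true}

/-- The Haar function `h_Q^ε` of a dyadic cube in `ℝⁿ` with signature `ε`. -/
noncomputable def haarN {n : ℕ} (Q : DyadicCube n) (ε : Fin n → Bool) :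
    (Fin n → ℝ) → ℝ := fun x =>
  ∏ i, if ε i then haarC Q.k (Q.m i) (x i) else haarNC Q.k (Q.m i) (x i)

/-! ### Auxiliary lemmas -/

lemma ind01 (s : Set ℝ) (t : ℝ) :
    Set.indicator s (fun _ => (1:ℝ)) t = 0 ∨ Set.indicator s (fun _ => (1:ℝ)) t = 1 := by
  by_cases h : t ∈ s <;> simp [h]

lemma abs_haarC_le (k m : ℤ) (t : ℝ) : |haarC k m t| ≤ (Real.sqrt (2 ^ k))⁻¹ := by
  unfold haarC
  have h2 : (0:ℝ) ≤ (Real.sqrt ((2:ℝ) ^ k))⁻¹ := by positivity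
  rw [abs_mul, abs_of_nonneg h2]
  have hd : |Set.indicator (Set.Ico ((2 * (m : ℝ) + 1) * 2 ^ (k - 1))
        ((2 * (m : ℝ) + 2) * 2 ^ (k - 1))) (fun _ => (1 : ℝ)) t -
      Set.indicator (Set.Ico ((2 * (m : ℝ)) * 2 ^ (k - 1)) ((2 * (m : ℝ) + 1) * 2 ^ (k - 1)))
        (fun _ => (1 : ℝ)) t| ≤ 1 := by
    rcases ind01 _ t with h1 | h1 <;> rcases ind01 _ t with h3 | h3 <;> rw [h1, h3] <;> norm_num
  calc (Real.sqrt ((2:ℝ) ^ k))⁻¹ * _ ≤ (Real.sqrt ((2:ℝ) ^ k))⁻¹ * 1 :=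
        mul_le_mul_of_nonneg_left hd h2
    _ = _ := mul_one _

lemma abs_haarNC_le (k m : ℤ) (t : ℝ) : |haarNC k m t| ≤ (Real.sqrt (2 ^ k))⁻¹ := by
  unfold haarNC
  have h2 : (0:ℝ) ≤ (Real.sqrt ((2:ℝ) ^ k))⁻¹ := by positivity
  rw [abs_mul, abs_of_nonneg h2]
  have hd : |Set.indicator (Set.Ico ((m : ℝ) * 2 ^ k) (((m : ℝ) + 1) * 2 ^ k))
      (fun _ => (1 : ℝ)) t| ≤ 1 := by
    rcases ind01 _ t with h1 | h1 <;> rw [h1] <;> norm_num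
  calc (Real.sqrt ((2:ℝ) ^ k))⁻¹ * _ ≤ (Real.sqrt ((2:ℝ) ^ k))⁻¹ * 1 :=
        mul_le_mul_of_nonneg_left hd h2
    _ = _ := mul_one _

lemma two_zpow_succ (k : ℤ) : (2:ℝ) ^ k = 2 ^ (k - 1) * 2 := by
  rw [← zpow_add_one₀ (two_ne_zero : (2:ℝ) ≠ 0) (k - 1)]
  norm_num

lemma haarC_eq_zero {k m : ℤ} {t : ℝ}
    (h : t ∉ Set.Ico ((m : ℝ) * 2 ^ k) (((m : ℝ) + 1) * 2 ^ k)) : haarC k m t = 0 := by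
  have hp : (0:ℝ) < 2 ^ (k - 1) := by positivity
  have hk := two_zpow_succ k
  simp only [Set.mem_Ico, not_and_or, not_le, not_lt] at h
  have e1 : (m : ℝ) * 2 ^ k = (2 * (m:ℝ)) * 2 ^ (k - 1) := by rw [hk]; ring
  have e2 : ((m : ℝ) + 1) * 2 ^ k = (2 * (m:ℝ) + 2) * 2 ^ (k - 1) := by rw [hk]; ring
  have hle1 : (2 * (m:ℝ)) * 2 ^ (k - 1) ≤ (2 * (m:ℝ) + 1) * 2 ^ (k - 1) :=
    mul_le_mul_of_nonneg_right (by linarith) hp.le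
  have hle2 : (2 * (m:ℝ) + 1) * 2 ^ (k - 1) ≤ (2 * (m:ℝ) + 2) * 2 ^ (k - 1) :=
    mul_le_mul_of_nonneg_right (by linarith) hp.le
  rw [e1, e2] at h
  have h1 : t ∉ Set.Ico ((2 * (m : ℝ) + 1) * 2 ^ (k - 1)) ((2 * (m : ℝ) + 2) * 2 ^ (k - 1)) := by
    simp only [Set.mem_Ico, not_and_or, not_le, not_lt]
    rcases h with h | h
    · left; linarith
    · right; linarith
  have h2 : t ∉ Set.Ico ((2 * (m : ℝ)) * 2 ^ (k - 1)) ((2 * (m : ℝ) + 1) * 2 ^ (k - 1)) := by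
    simp only [Set.mem_Ico, not_and_or, not_le, not_lt]
    rcases h with h | h
    · left; linarith
    · right; linarith
  unfold haarC
  rw [Set.indicator_of_notMem h1, Set.indicator_of_notMem h2]
  ring

lemma haarNC_eq_zero {k m : ℤ} {t : ℝ}
    (h : t ∉ Set.Ico ((m : ℝ) * 2 ^ k) (((m : ℝ) + 1) * 2 ^ k)) : haarNC k m t = 0 := by
  unfold haarNC
  rw [Set.indicator_of_notMem h, mul_zero]

lemma integrable_ind (a b : ℝ) :
    Integrable (Set.indicator (Set.Ico a b) (fun _ => (1:ℝ))) := by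
  rw [integrable_indicator_iff measurableSet_Ico]
  exact integrableOn_const (by rw [Real.volume_Ico]; exact ENNReal.ofReal_ne_top)

lemma integral_ind (a b : ℝ) (hab : a ≤ b) :
    (∫ t, Set.indicator (Set.Ico a b) (fun _ => (1:ℝ)) t) = b - a := by
  have : (fun _ => (1:ℝ)) = (1 : ℝ → ℝ) := rfl
  rw [this, integral_indicator_one measurableSet_Ico, measureReal_def, Real.volume_Ico,
    ENNReal.toReal_ofReal (by linarith)]

lemma integral_haarC (k m : ℤ) : (∫ t, haarC k m t) = 0 := by
  have hp : (0:ℝ) < 2 ^ (k - 1) := by positivity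
  unfold haarC
  rw [integral_const_mul, integral_sub (integrable_ind _ _) (integrable_ind _ _),
    integral_ind _ _ (mul_le_mul_of_nonneg_right (by linarith) hp.le),
    integral_ind _ _ (mul_le_mul_of_nonneg_right (by linarith) hp.le)]
  ring

lemma measurable_haarC (k m : ℤ) : Measurable (haarC k m) := by
  unfold haarC
  exact measurable_const.mul ((measurable_const.indicator measurableSet_Ico).sub
    (measurable_const.indicator measurableSet_Ico))

lemma measurable_haarNC (k m : ℤ) : Measurable (haarNC k m) := by
  unfold haarNC
  exact measurable_const.mul (measurable_const.indicator measurableSet_Ico)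

lemma sqrt_pow_aux (a : ℝ) (ha : 0 ≤ a) (n : ℕ) :
    Real.sqrt (a ^ n) = (Real.sqrt a) ^ n := by
  have h1 : ((Real.sqrt a) ^ n) ^ 2 = a ^ n := by
    rw [← pow_mul, mul_comm, pow_mul, Real.sq_sqrt ha]
  rw [← h1, Real.sqrt_sq (by positivity)]

lemma toSet_pi {n : ℕ} (Q : DyadicCube n) :
    Q.toSet = Set.pi Set.univ
      (fun i => Set.Ico ((Q.m i : ℝ) * 2 ^ Q.k) (((Q.m i : ℝ) + 1) * 2 ^ Q.k)) := by
  ext x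
  simp [DyadicCube.toSet, Set.mem_pi]

lemma volume_toSet {n : ℕ} (Q : DyadicCube n) :
    volume Q.toSet = (ENNReal.ofReal ((2:ℝ) ^ Q.k)) ^ n := by
  rw [toSet_pi, volume_pi_pi]
  have : ∀ i : Fin n, volume (Set.Ico ((Q.m i : ℝ) * 2 ^ Q.k) (((Q.m i : ℝ) + 1) * 2 ^ Q.k)) =
      ENNReal.ofReal ((2:ℝ) ^ Q.k) := by
    intro i
    rw [Real.volume_Ico]
    congr 1
    ring
  simp only [this, Finset.prod_const, Finset.card_univ, Fintype.card_fin]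

lemma vol_eq {n : ℕ} (Q : DyadicCube n) : Q.vol = ((2:ℝ) ^ Q.k) ^ n := by
  rw [DyadicCube.vol, volume_toSet, ← ENNReal.ofReal_pow (by positivity),
    ENNReal.toReal_ofReal (by positivity)]

lemma vol_pos {n : ℕ} (Q : DyadicCube n) : 0 < Q.vol := by
  rw [vol_eq]; positivity

lemma sqrt_vol {n : ℕ} (Q : DyadicCube n) :
    Real.sqrt Q.vol = (Real.sqrt ((2:ℝ) ^ Q.k)) ^ n := by
  rw [vol_eq, sqrt_pow_aux _ (by positivity)]

lemma abs_haarN_le {n : ℕ} (Q : DyadicCube n) (ε : Fin n → Bool) (x : Fin n → ℝ) :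
    |haarN Q ε x| ≤ (Real.sqrt Q.vol)⁻¹ := by
  unfold haarN
  rw [Finset.abs_prod, sqrt_vol, ← inv_pow]
  calc (∏ i, |if ε i then haarC Q.k (Q.m i) (x i) else haarNC Q.k (Q.m i) (x i)|)
      ≤ ∏ _i : Fin n, (Real.sqrt ((2:ℝ) ^ Q.k))⁻¹ := by
        apply Finset.prod_le_prod (fun i _ => abs_nonneg _)
        intro i _
        by_cases h : ε i <;> simp only [h, if_true, if_false]
        · exact abs_haarC_le _ _ _
        · exact abs_haarNC_le _ _ _
    _ = ((Real.sqrt ((2:ℝ) ^ Q.k))⁻¹) ^ n := by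
        rw [Finset.prod_const, Finset.card_univ, Fintype.card_fin]

lemma haarN_eq_zero {n : ℕ} (Q : DyadicCube n) (ε : Fin n → Bool) {x : Fin n → ℝ}
    (hx : x ∉ Q.toSet) : haarN Q ε x = 0 := by
  rw [DyadicCube.toSet, Set.mem_setOf_eq] at hx
  push_neg at hx
  obtain ⟨i, hi⟩ := hx
  have hmem : x i ∉ Set.Ico ((Q.m i : ℝ) * 2 ^ Q.k) (((Q.m i : ℝ) + 1) * 2 ^ Q.k) := by
    simp only [Set.mem_Ico]
    intro h
    exact absurd (h.2) (not_lt.2 (hi h.1))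
  apply Finset.prod_eq_zero (Finset.mem_univ i)
  by_cases h : ε i <;> simp only [h, if_true, if_false]
  · exact haarC_eq_zero hmem
  · exact haarNC_eq_zero hmem

lemma measurable_haarN {n : ℕ} (Q : DyadicCube n) (ε : Fin n → Bool) :
    Measurable (haarN Q ε) := by
  unfold haarN
  apply Finset.measurable_prod
  intro i _
  by_cases h : ε i <;> simp only [h, if_true, if_false]
  · exact (measurable_haarC _ _).comp (measurable_pi_apply i)
  · exact (measurable_haarNC _ _).comp (measurable_pi_apply i)

lemma integral_haarN {n : ℕ} (Q : DyadicCube n) (ε : Fin n → Bool)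
    (hε : ∃ i, ε i = true) : (∫ x, haarN Q ε x) = 0 := by
  obtain ⟨i0, hi0⟩ := hε
  have heq : (fun x : Fin n → ℝ =>
      ∏ i, if ε i then haarC Q.k (Q.m i) (x i) else haarNC Q.k (Q.m i) (x i)) =
      fun x => ∏ i, (if ε i then haarC Q.k (Q.m i) else haarNC Q.k (Q.m i)) (x i) := by
    funext x
    exact Finset.prod_congr rfl fun i _ => by by_cases h : ε i <;> simp [h]
  simp only [haarN]
  rw [heq, MeasureTheory.integral_fintype_prod_volume_eq_prod
    (fun i => if ε i then haarC Q.k (Q.m i) else haarNC Q.k (Q.m i))]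
  apply Finset.prod_eq_zero (Finset.mem_univ i0)
  rw [hi0]
  simp only [if_true]
  exact integral_haarC _ _

/-- Let `w` be a weight on `ℝⁿ` and `b ∈ BMO^D(w)` with norm at most `B`. Then for
every dyadic cube `Q` and every cancellative Haar function `h_Q^ε`, the Haar
coefficients of `b` satisfy `|(b, h_Q^ε)| ≤ C(n) |Q|^{1/2} ⟨w⟩_Q B` for a constant
`C(n)` depending only on the dimension. -/
theorem stmt19 (n : ℕ) :
    ∃ C : ℝ, 0 < C ∧
      ∀ (w b : (Fin n → ℝ) → ℝ) (B : ℝ),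
        (∀ᵐ x, 0 < w x) → LocallyIntegrable w volume → LocallyIntegrable b volume →
        (∀ Q₀ : DyadicCube n,
          (∫ x in Q₀.toSet, |b x - davg b Q₀|) ≤ B * ∫ x in Q₀.toSet, w x) →
        ∀ (Q : DyadicCube n) (ε : Fin n → Bool), (∃ i, ε i = true) →
          |inn b (haarN Q ε)| ≤ C * Real.sqrt Q.vol * davg w Q * B := by
  refine ⟨1, one_pos, ?_⟩
  intro w b B hw hwint hbint hBMO Q ε hε
  set h := haarN Q ε with hh
  set c := davg b Q with hc
  have hv : 0 < Q.vol := vol_pos Q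
  have hs : 0 < Real.sqrt Q.vol := Real.sqrt_pos.2 hv
  set M : ℝ := (Real.sqrt Q.vol)⁻¹ with hM
  have hM0 : 0 ≤ M := by positivity
  -- integrability of b on Q
  have hQsub : Q.toSet ⊆ Set.pi Set.univ
      (fun i => Set.Icc ((Q.m i : ℝ) * 2 ^ Q.k) (((Q.m i : ℝ) + 1) * 2 ^ Q.k)) := by
    intro x hx i _
    exact ⟨(hx i).1, le_of_lt (hx i).2⟩
  have hcomp : IsCompact (Set.pi Set.univ
      (fun i : Fin n => Set.Icc ((Q.m i : ℝ) * 2 ^ Q.k) (((Q.m i : ℝ) + 1) * 2 ^ Q.k))) :=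
    isCompact_univ_pi fun i => isCompact_Icc
  have hbQ : IntegrableOn b Q.toSet volume :=
    (hbint.integrableOn_isCompact hcomp).mono_set hQsub
  have hQmeas : MeasurableSet Q.toSet := by
    rw [toSet_pi]
    exact MeasurableSet.univ_pi fun i => measurableSet_Ico
  have hQfin : volume Q.toSet ≠ ⊤ := by
    intro hcon
    rw [DyadicCube.vol, hcon] at hv
    simp at hv
  -- integrability of h on Q
  have hhm : Measurable h := measurable_haarN Q ε
  have hhQ : IntegrableOn h Q.toSet volume := by
    exact Measure.integrableOn_of_bounded (M := M) hQfin hhm.aestronglyMeasurable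
      (Filter.Eventually.of_forall fun x => by
        rw [Real.norm_eq_abs, hh]; exact abs_haarN_le Q ε x)
  have hbcQ : IntegrableOn (fun x => b x - c) Q.toSet volume :=
    hbQ.sub (integrableOn_const hQfin)
  have hprodQ : IntegrableOn (fun x => (b x - c) * h x) Q.toSet volume := by
    have := Integrable.bdd_mul hbcQ
      (hhm.aestronglyMeasurable.restrict)
      (Filter.Eventually.of_forall fun x => by rw [Real.norm_eq_abs, hh]; exact abs_haarN_le Q ε x)
    -- this : Integrable (fun x => h x * (b x - c))
    have heq : (fun x => (b x - c) * h x) = fun x => h x * (b x - c) := by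
      funext x; ring
    rw [heq]
    exact this
  -- reduce inn to an integral over Q
  have hzero : ∀ x, x ∉ Q.toSet → b x * h x = 0 := fun x hx => by
    rw [hh, haarN_eq_zero Q ε hx, mul_zero]
  have hinn : inn b h = ∫ x in Q.toSet, b x * h x :=
    (setIntegral_eq_integral_of_forall_compl_eq_zero hzero).symm
  have hhfull : (∫ x in Q.toSet, h x) = ∫ x, h x :=
    setIntegral_eq_integral_of_forall_compl_eq_zero fun x hx => by
      rw [hh]; exact haarN_eq_zero Q ε hx
  have hhzero : (∫ x in Q.toSet, h x) = 0 := by rw [hhfull, integral_haarN Q ε hε]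
  have hsplit : (∫ x in Q.toSet, b x * h x) = ∫ x in Q.toSet, (b x - c) * h x := by
    have : ∀ x, b x * h x = (b x - c) * h x + c * h x := fun x => by ring
    rw [integral_congr_ae (Filter.Eventually.of_forall fun x => this x),
      integral_add hprodQ (hhQ.const_mul c), integral_const_mul, hhzero, mul_zero, add_zero]
  -- main estimate
  have hbound : |∫ x in Q.toSet, (b x - c) * h x| ≤ ∫ x in Q.toSet, |b x - c| * M := by
    have hgint : Integrable (fun x => |b x - c| * M) (volume.restrict Q.toSet) :=
      hbcQ.abs.mul_const M
    have key := norm_integral_le_of_norm_le (f := fun x => (b x - c) * h x)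
      (μ := volume.restrict Q.toSet) hgint
      (Filter.Eventually.of_forall fun x => by
        rw [Real.norm_eq_abs, abs_mul, hh]
        exact mul_le_mul_of_nonneg_left (abs_haarN_le Q ε x) (abs_nonneg _))
    rw [← Real.norm_eq_abs]
    exact key
  have hstep : (∫ x in Q.toSet, |b x - c| * M) ≤ (B * ∫ x in Q.toSet, w x) * M := by
    rw [integral_mul_const]
    exact mul_le_mul_of_nonneg_right (hBMO Q) hM0
  have hfinal : (B * ∫ x in Q.toSet, w x) * M = 1 * Real.sqrt Q.vol * davg w Q * B := by
    have hvol : Q.vol = Real.sqrt Q.vol * Real.sqrt Q.vol := (Real.mul_self_sqrt hv.le).symm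
    rw [davg, hM, hvol]
    rw [Real.sqrt_mul_self hs.le]
    field_simp
  calc |inn b h| = |∫ x in Q.toSet, (b x - c) * h x| := by rw [hinn, hsplit]
    _ ≤ ∫ x in Q.toSet, |b x - c| * M := hbound
    _ ≤ (B * ∫ x in Q.toSet, w x) * M := hstep
    _ = 1 * Real.sqrt Q.vol * davg w Q * B := hfinal
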